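/- arXiv:1302.3863 — 4 statements merged into one kernel-verified Lean document; each statement's English description precedes it below -/
import Mathlib

section
/- Let α, β, β' be positive integers with α > β ≥ 2, α > β' ≥ 2, gcd(α,β) = 1, and β·β' ≡ 1 (mod α). Then S(α, β') = S(α, β). -/
open Matrix


/-- Sum of the partial quotients of the regular continued fraction expansion
of `p / q`, computed via the Euclidean algorithm. -/
def S (p q : ℕ) : ℕ :=
  if _h : q = 0 then 0 else p / q + S q (p % q)
termination_by q
decreasing_by exact Nat.mod_lt _ (Nat.pos_of_ne_zero _h)

lemma S_zero (p : ℕ) : S p 0 = 0 := by rw [S]; simp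
lemma S_pos (p q : ℕ) (h : q ≠ 0) : S p q = p / q + S q (p % q) := by rw [S]; simp [h]

def g (a : ℕ) : Matrix (Fin 2) (Fin 2) ℕ := !![a, 1; 1, 0]

def M (l : List ℕ) : Matrix (Fin 2) (Fin 2) ℕ := (l.map g).prod

lemma M_nil : M [] = 1 := rfl
lemma M_cons (a : ℕ) (l : List ℕ) : M (a :: l) = g a * M l := by simp [M]
lemma M_append (s t : List ℕ) : M (s ++ t) = M s * M t := by simp [M]

lemma gmul (a : ℕ) (X : Matrix (Fin 2) (Fin 2) ℕ) :
    g a * X = !![a * (X 0 0) + X 1 0, a * (X 0 1) + X 1 1; X 0 0, X 0 1] := by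
  ext i j
  fin_cases i <;> fin_cases j <;>
    simp [g, Matrix.mul_apply, Fin.sum_univ_two]

lemma gT (a : ℕ) : (g a)ᵀ = g a := by
  ext i j
  fin_cases i <;> fin_cases j <;> simp [g]

lemma M_reverse (l : List ℕ) : M l.reverse = (M l)ᵀ := by
  rw [M, M, Matrix.transpose_list_prod, List.map_map, List.map_reverse]
  congr 1
  simp [Function.comp, gT]

lemma M_det : ∀ l : List ℕ, ((M l 0 0 : ℕ) : ℤ) * (M l 1 1 : ℕ) - (M l 0 1 : ℕ) * (M l 1 0 : ℕ) = (-1) ^ l.length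
  | [] => by simp [M_nil, Matrix.one_apply]
  | a :: l => by
    have IH := M_det l
    rw [M_cons, gmul]
    set X := M l with hX
    have E00 : (!![a * (X 0 0) + X 1 0, a * (X 0 1) + X 1 1; X 0 0, X 0 1] : Matrix (Fin 2) (Fin 2) ℕ) 0 0 = a * (X 0 0) + X 1 0 := by simp
    have E01 : (!![a * (X 0 0) + X 1 0, a * (X 0 1) + X 1 1; X 0 0, X 0 1] : Matrix (Fin 2) (Fin 2) ℕ) 0 1 = a * (X 0 1) + X 1 1 := by simp
    have E10 : (!![a * (X 0 0) + X 1 0, a * (X 0 1) + X 1 1; X 0 0, X 0 1] : Matrix (Fin 2) (Fin 2) ℕ) 1 0 = X 0 0 := by simp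
    have E11 : (!![a * (X 0 0) + X 1 0, a * (X 0 1) + X 1 1; X 0 0, X 0 1] : Matrix (Fin 2) (Fin 2) ℕ) 1 1 = X 0 1 := by simp
    rw [E00, E01, E10, E11, List.length_cons, pow_succ]
    push_cast
    linear_combination (-1 : ℤ) * IH

lemma main : ∀ (l : List ℕ), (∀ a ∈ l, 1 ≤ a) → l ≠ [] → (∀ x, l.getLast? = some x → 2 ≤ x) →
    (1 ≤ M l 1 0 ∧ M l 1 0 < M l 0 0) ∧ S (M l 0 0) (M l 1 0) = l.sum
  | [], _, h, _ => absurd rfl h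
  | [a], h1, _, h3 => by
    have ha : 2 ≤ a := h3 a (by simp)
    have hM : M [a] = g a := by simp [M]
    rw [hM]
    have h00 : g a 0 0 = a := by simp [g]
    have h10 : g a 1 0 = 1 := by simp [g]
    rw [h00, h10]
    refine ⟨⟨le_refl 1, by omega⟩, ?_⟩
    rw [S_pos a 1 one_ne_zero]
    simp [Nat.mod_one, S_zero]
  | a :: b :: t, h1, _, h3 => by
    have IH := main (b :: t) (fun x hx => h1 x (List.mem_cons_of_mem a hx))
      (List.cons_ne_nil b t) (fun x hx => h3 x (by rwa [List.getLast?_cons_cons]))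
    obtain ⟨⟨hq1, hqlt⟩, hS⟩ := IH
    set X := M (b :: t) with hX
    have ha : 1 ≤ a := h1 a List.mem_cons_self
    rw [M_cons, gmul]
    have h00 : (!![a * (X 0 0) + X 1 0, a * (X 0 1) + X 1 1; X 0 0, X 0 1] : Matrix (Fin 2) (Fin 2) ℕ) 0 0 = a * (X 0 0) + X 1 0 := by simp
    have h10 : (!![a * (X 0 0) + X 1 0, a * (X 0 1) + X 1 1; X 0 0, X 0 1] : Matrix (Fin 2) (Fin 2) ℕ) 1 0 = X 0 0 := by simp
    rw [h00, h10]
    have hmul : X 0 0 ≤ a * X 0 0 := Nat.le_mul_of_pos_left _ (by omega)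
    constructor
    · exact ⟨by omega, by omega⟩
    · rw [S_pos _ _ (by omega)]
      have e1 : (a * X 0 0 + X 1 0) / (X 0 0) = a := by
        rw [add_comm, mul_comm, Nat.add_mul_div_left _ _ (by omega : 0 < X 0 0),
          Nat.div_eq_of_lt hqlt, zero_add]
      have e2 : (a * X 0 0 + X 1 0) % (X 0 0) = X 1 0 := by
        rw [add_comm, mul_comm, Nat.add_mul_mod_self_left, Nat.mod_eq_of_lt hqlt]
      rw [e1, e2, hS]
      simp [List.sum_cons]

def Slist (p q : ℕ) : List ℕ :=
  if _h : q = 0 then [] else p / q :: Slist q (p % q)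
termination_by q
decreasing_by exact Nat.mod_lt _ (Nat.pos_of_ne_zero _h)

lemma Slist_zero (p : ℕ) : Slist p 0 = [] := by rw [Slist]; simp
lemma Slist_pos (p q : ℕ) (h : q ≠ 0) : Slist p q = p / q :: Slist q (p % q) := by
  rw [Slist]; simp [h]

lemma Slist_sum : ∀ q p : ℕ, (Slist p q).sum = S p q := by
  intro q
  induction q using Nat.strong_induction_on with
  | _ q IH =>
    intro p
    by_cases h : q = 0
    · subst h; rw [Slist_zero, S_zero]; rfl
    · rw [Slist_pos p q h, S_pos p q h, List.sum_cons,
        IH (p % q) (Nat.mod_lt _ (Nat.pos_of_ne_zero h)) q]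

lemma Slist_spec : ∀ q p : ℕ, 0 < q → q < p → Nat.Coprime p q →
    (∀ a ∈ Slist p q, 1 ≤ a) ∧ Slist p q ≠ [] ∧
    (∀ x, (Slist p q).getLast? = some x → 2 ≤ x) ∧
    M (Slist p q) 0 0 = p ∧ M (Slist p q) 1 0 = q := by
  intro q
  induction q using Nat.strong_induction_on with
  | _ q IH =>
    intro p hq hqp hcop
    by_cases h : p % q = 0
    · have hq1 : q = 1 := by
        have hdvd : q ∣ p := Nat.dvd_of_mod_eq_zero h
        exact Nat.Coprime.eq_one_of_dvd hcop.symm hdvd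
      subst hq1
      have hl : Slist p 1 = [p] := by
        rw [Slist_pos p 1 one_ne_zero, Nat.div_one, Nat.mod_one, Slist_zero]
      rw [hl]
      have hM : M [p] = g p := by simp [M]
      refine ⟨by intro a ha; simp at ha; omega, by simp, ?_, ?_, ?_⟩
      · intro x hx; simp at hx; omega
      · rw [hM]; simp [g]
      · rw [hM]; simp [g]
    · have IH' := IH (p % q) (Nat.mod_lt _ hq) q (Nat.pos_of_ne_zero h)
        (Nat.mod_lt _ hq)
        (by
          have h1 : Nat.gcd q p = Nat.gcd (p % q) q := Nat.gcd_rec q p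
          unfold Nat.Coprime at hcop ⊢
          rw [Nat.gcd_comm q (p % q), ← h1, Nat.gcd_comm q p]
          exact hcop)
      obtain ⟨ih1, ih2, ih3, ih4, ih5⟩ := IH'
      rw [Slist_pos p q (by omega)]
      have hd1 : 1 ≤ p / q := (Nat.one_le_div_iff hq).mpr (le_of_lt hqp)
      refine ⟨?_, by simp, ?_, ?_, ?_⟩
      · intro a ha
        rcases List.mem_cons.mp ha with h' | h'
        · omega
        · exact ih1 a h'
      · intro x hx
        obtain ⟨b, t, hbt⟩ := List.exists_cons_of_ne_nil ih2
        rw [hbt] at hx ih3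
        rw [List.getLast?_cons_cons] at hx
        exact ih3 x hx
      · rw [M_cons, gmul]
        have : (!![p / q * (M (Slist q (p % q)) 0 0) + M (Slist q (p % q)) 1 0, p / q * (M (Slist q (p % q)) 0 1) + M (Slist q (p % q)) 1 1; M (Slist q (p % q)) 0 0, M (Slist q (p % q)) 0 1] : Matrix (Fin 2) (Fin 2) ℕ) 0 0 = p / q * (M (Slist q (p % q)) 0 0) + M (Slist q (p % q)) 1 0 := by simp
        rw [this, ih4, ih5, Nat.div_add_mod' p q]
      · rw [M_cons, gmul]
        have : (!![p / q * (M (Slist q (p % q)) 0 0) + M (Slist q (p % q)) 1 0, p / q * (M (Slist q (p % q)) 0 1) + M (Slist q (p % q)) 1 1; M (Slist q (p % q)) 0 0, M (Slist q (p % q)) 0 1] : Matrix (Fin 2) (Fin 2) ℕ) 1 0 = M (Slist q (p % q)) 0 0 := by simp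
        rw [this, ih4]

lemma col_merge (s : List ℕ) (b : ℕ) (i : Fin 2) :
    M (s ++ [b, 1]) i 0 = M (s ++ [b + 1]) i 0 := by
  rw [M_append, M_append]
  have h0 : M [b, 1] 0 0 = M [b + 1] 0 0 := by
    simp [M, g, Matrix.mul_apply, Fin.sum_univ_two]
  have h1 : M [b, 1] 1 0 = M [b + 1] 1 0 := by
    simp [M, g, Matrix.mul_apply, Fin.sum_univ_two]
  simp only [Matrix.mul_apply, Fin.sum_univ_two]
  rw [h0, h1]

lemma S_sub_aux (a x : ℕ) (hx : 0 < x) (h : 2 * x < a) : S a (a - x) = S a x := by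
  have h1 : a / (a - x) = 1 := Nat.div_eq_of_lt_le (by omega) (by omega)
  have h2 : a % (a - x) = x := by
    rw [Nat.mod_eq_sub_mod (by omega), Nat.mod_eq_of_lt (by omega)]
    omega
  have key : a - x + x = a := by omega
  have h3 : a / x = (a - x) / x + 1 := by
    conv_lhs => rw [← key]
    rw [Nat.add_div_right _ hx]
  have h4 : a % x = (a - x) % x := by
    conv_lhs => rw [← key]
    rw [Nat.add_mod_right]
  rw [S_pos a (a - x) (by omega), S_pos a x (by omega), h1, h2, h3, h4,
    S_pos (a - x) x (by omega)]
  omega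

lemma S_sub (a x : ℕ) (hx : 0 < x) (hxa : x < a) : S a (a - x) = S a x := by
  rcases lt_trichotomy (2 * x) a with h | h | h
  · exact S_sub_aux a x hx h
  · have : a - x = x := by omega
    rw [this]
  · have h' := S_sub_aux a (a - x) (by omega) (by omega)
    have : a - (a - x) = x := by omega
    rw [this] at h'
    exact h'.symm

theorem stmt_2 (α β β' : ℕ) (hβ : 2 ≤ β) (hβα : β < α) (hβ' : 2 ≤ β') (hβ'α : β' < α)
    (hcop : Nat.Coprime α β) (hmod : β * β' ≡ 1 [MOD α]) :
    S α β' = S α β := by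
  obtain ⟨h1, h2, h3, h4, h5⟩ := Slist_spec β α (by omega) hβα hcop
  set l := Slist α β with hl
  set c := M l 0 1 with hc
  set r := l.reverse with hrdef
  have hr00 : M r 0 0 = α := by rw [hrdef, M_reverse, Matrix.transpose_apply, h4]
  have hr10 : M r 1 0 = c := by rw [hrdef, M_reverse, Matrix.transpose_apply]
  have hr1 : ∀ x ∈ r, 1 ≤ x := fun x hx => h1 x (List.mem_reverse.mp hx)
  have hrsum : r.sum = l.sum := List.sum_reverse l
  obtain ⟨a, t, hat⟩ := List.exists_cons_of_ne_nil h2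
  have ha1 : 1 ≤ a := h1 a (by rw [hat]; exact List.mem_cons_self)
  have hmain : (1 ≤ c ∧ c < α) ∧ S α c = l.sum := by
    by_cases ha2 : 2 ≤ a
    · have hrne : r ≠ [] := by rw [hrdef, hat]; simp
      have hlast : ∀ x, r.getLast? = some x → 2 ≤ x := by
        intro x hx
        rw [hrdef, List.getLast?_reverse, hat] at hx
        simp at hx
        omega
      obtain ⟨⟨hb1, hb2⟩, hbS⟩ := main r hr1 hrne hlast
      rw [hr10] at hb1
      rw [hr00, hr10] at hb2 hbS
      exact ⟨⟨hb1, hb2⟩, by rw [hbS, hrsum]⟩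
    · have ha : a = 1 := by omega
      have htne : t ≠ [] := by
        intro h0
        have := h3 1 (by rw [hat, h0, ha]; rfl)
        omega
      have htr : t.reverse ≠ [] := by simpa using htne
      rcases List.eq_nil_or_concat t.reverse with h0 | ⟨s, b, hsb⟩
      · exact absurd h0 htr
      · rw [List.concat_eq_append] at hsb
        have hr : r = s ++ [b, 1] := by
          rw [hrdef, hat, ha, List.reverse_cons, hsb, List.append_assoc]
          rfl
        have hb1 : 1 ≤ b := hr1 b (by rw [hr]; simp)
        set r' := s ++ [b + 1] with hr'
        have hcol : ∀ i, M r' i 0 = M r i 0 := by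
          intro i
          rw [hr, hr']
          exact (col_merge s b i).symm
        have h1' : ∀ x ∈ r', 1 ≤ x := by
          intro x hx
          rcases List.mem_append.mp hx with h' | h'
          · exact hr1 x (by rw [hr]; exact List.mem_append_left _ h')
          · simp at h'; omega
        have hne' : r' ≠ [] := by simp [hr']
        have hlast' : ∀ x, r'.getLast? = some x → 2 ≤ x := by
          intro x hx
          rw [hr', List.getLast?_concat] at hx
          simp at hx
          omega
        obtain ⟨⟨hb1', hb2'⟩, hbS'⟩ := main r' h1' hne' hlast'
        rw [hcol 1, hr10] at hb1'
        rw [hcol 0, hcol 1, hr00, hr10] at hb2' hbS'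
        have hsum' : r'.sum = r.sum := by
          rw [hr, hr']
          simp [List.sum_append]
        exact ⟨⟨hb1', hb2'⟩, by rw [hbS', hsum', hrsum]⟩
  obtain ⟨⟨hc1, hclt⟩, hSc⟩ := hmain
  have hSβ : l.sum = S α β := Slist_sum β α
  have hdet := M_det l
  rw [h4, h5] at hdet
  haveI : NeZero α := ⟨by omega⟩
  have hbc : (β : ZMod α) * (c : ZMod α) = (-1) ^ (l.length + 1) := by
    have hz := congrArg (fun z : ℤ => (z : ZMod α)) hdet
    push_cast at hz
    rw [ZMod.natCast_self] at hz
    rw [pow_succ]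
    linear_combination (-1 : ZMod α) * hz
  have hbb : (β : ZMod α) * (β' : ZMod α) = 1 := by
    have := (ZMod.natCast_eq_natCast_iff (β * β') 1 α).mpr hmod
    push_cast at this
    exact this
  have hcval : (c : ZMod α) = (β' : ZMod α) * (-1) ^ (l.length + 1) := by
    calc (c : ZMod α) = ((β : ZMod α) * β') * c := by rw [hbb, one_mul]
    _ = (β' : ZMod α) * ((β : ZMod α) * c) := by ring
    _ = (β' : ZMod α) * (-1) ^ (l.length + 1) := by rw [hbc]
  rcases neg_one_pow_eq_or (ZMod α) (l.length + 1) with hpow | hpow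
  · rw [hpow, mul_one] at hcval
    have hceq : c = β' := by
      have h := congrArg ZMod.val hcval
      rwa [ZMod.val_cast_of_lt hclt, ZMod.val_cast_of_lt hβ'α] at h
    rw [← hceq, hSc, hSβ]
  · rw [hpow, mul_neg_one] at hcval
    have hsub : ((α - β' : ℕ) : ZMod α) = -(β' : ZMod α) := by
      rw [Nat.cast_sub (le_of_lt hβ'α), ZMod.natCast_self, zero_sub]
    have hceq : c = α - β' := by
      have h := congrArg ZMod.val (hcval.trans hsub.symm)
      rwa [ZMod.val_cast_of_lt hclt, ZMod.val_cast_of_lt (by omega : α - β' < α)] at h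
    have hβ'c : β' = α - c := by omega
    rw [hβ'c, S_sub α c hc1 hclt, hSc, hSβ]
end

section
/- Let α > β ≥ 2 be coprime integers, let α' be the unique integer with 0 < α' < β and α·α' ≡ 1 (mod β), and suppose β ≥ 2 and α' ≥ 2 (or interpret S(β,1) = β). Then S(β, α') = S(α, β) - ⌊α/β⌋. -/
open Matrix


/-- List of partial quotients. -/
def cfL (p q : ℕ) : List ℕ :=
  if _h : q = 0 then [] else p / q :: cfL q (p % q)
termination_by q
decreasing_by exact Nat.mod_lt _ (Nat.pos_of_ne_zero _h)

def mf (a : ℕ) : Matrix (Fin 2) (Fin 2) ℕ := !![a, 1; 1, 0]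

def mP (l : List ℕ) : Matrix (Fin 2) (Fin 2) ℕ := (l.map mf).prod

lemma mP_nil : mP [] = 1 := rfl

lemma mP_cons (a : ℕ) (l : List ℕ) : mP (a :: l) = mf a * mP l := by
  simp [mP, List.prod_cons]

lemma mP_append (l₁ l₂ : List ℕ) : mP (l₁ ++ l₂) = mP l₁ * mP l₂ := by
  simp [mP, List.prod_append]

lemma mf_entries (a : ℕ) (B : Matrix (Fin 2) (Fin 2) ℕ) :
    (mf a * B) 0 0 = a * B 0 0 + B 1 0 ∧ (mf a * B) 1 0 = B 0 0 ∧
    (mf a * B) 0 1 = a * B 0 1 + B 1 1 ∧ (mf a * B) 1 1 = B 0 1 := by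
  simp [mf, Matrix.mul_apply, Fin.sum_univ_two]

lemma mf_transpose (a : ℕ) : (mf a)ᵀ = mf a := by
  simp [mf]
  ext i j
  fin_cases i <;> fin_cases j <;> rfl

lemma mP_reverse (l : List ℕ) : mP l.reverse = (mP l)ᵀ := by
  induction l with
  | nil => simp [mP_nil]
  | cons a l ih =>
      rw [List.reverse_cons, mP_append, mP_cons, ih, mP_cons, mP_nil, mul_one,
        Matrix.transpose_mul, mf_transpose]

/-- Key lemma A : value recovery and `S`-sum from the continuant matrix. -/
lemma keyA : ∀ l : List ℕ, l ≠ [] → (∀ a ∈ l, 1 ≤ a) →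
    S (mP l 0 0) (mP l 1 0) = l.sum ∧ 1 ≤ mP l 1 0 ∧ mP l 1 0 ≤ mP l 0 0 ∧
      (mP l 1 0 = mP l 0 0 → l = [1]) := by
  intro l
  induction l with
  | nil => intro h; exact absurd rfl h
  | cons a l ih =>
      intro _ hpos
      have ha : 1 ≤ a := hpos a (by simp)
      match l, ih with
      | [], _ =>
          have h00 : mP [a] 0 0 = a := by simp [mP_cons, mP_nil, mf]
          have h10 : mP [a] 1 0 = 1 := by simp [mP_cons, mP_nil, mf]
          have hS1 : S a 1 = a := by
            rw [S, dif_neg one_ne_zero, Nat.mod_one, Nat.div_one, S]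
            simp
          refine ⟨?_, ?_, ?_, ?_⟩
          · rw [h00, h10, hS1]; simp
          · rw [h10]
          · rw [h00, h10]; exact ha
          · rw [h10, h00]; intro h; rw [← h]
      | b :: l', ih =>
          obtain ⟨hS, hq1, hqp, heqc⟩ := ih (by simp)
            (fun x hx => hpos x (List.mem_cons_of_mem _ hx))
          obtain ⟨e00, e10, -, -⟩ := mf_entries a (mP (b :: l'))
          rw [mP_cons]
          rcases lt_or_eq_of_le hqp with hlt | heq'
          · -- q' < p'
            have hp0 : 0 < mP (b :: l') 0 0 := by omega
            refine ⟨?_, ?_, ?_, ?_⟩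
            · rw [e00, e10, S, dif_neg (by omega : mP (b :: l') 0 0 ≠ 0)]
              have hdiv : (a * mP (b :: l') 0 0 + mP (b :: l') 1 0) /
                  mP (b :: l') 0 0 = a := by
                rw [mul_comm, Nat.mul_add_div hp0, Nat.div_eq_of_lt hlt, add_zero]
              have hmodd : (a * mP (b :: l') 0 0 + mP (b :: l') 1 0) %
                  mP (b :: l') 0 0 = mP (b :: l') 1 0 := by
                rw [mul_comm, Nat.mul_add_mod, Nat.mod_eq_of_lt hlt]
              rw [hdiv, hmodd, hS]
              simp [List.sum_cons]
            · rw [e10]; omega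
            · rw [e00, e10]; nlinarith
            · rw [e00, e10]; intro h; nlinarith
          · -- q' = p', so b :: l' = [1]
            have hl1 : b :: l' = [1] := heqc heq'
            have hp1 : mP (b :: l') 0 0 = 1 := by
              rw [hl1]; simp [mP_cons, mP_nil, mf]
            have hq1' : mP (b :: l') 1 0 = 1 := by
              rw [hl1]; simp [mP_cons, mP_nil, mf]
            have hS1 : S (a * 1 + 1) 1 = a + 1 := by
              rw [S, dif_neg one_ne_zero, Nat.mod_one, Nat.div_one, S]
              simp
            refine ⟨?_, ?_, ?_, ?_⟩
            · rw [e00, e10, hp1, hq1', hS1, hl1]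
              simp
            · rw [e10, hp1]
            · rw [e00, e10, hp1, hq1']; omega
            · rw [e00, e10, hp1, hq1']; intro h
              exfalso; omega

/-- Determinant identity, parity-tracked. -/
lemma keyD : ∀ l : List ℕ,
    (Odd l.length → mP l 0 0 * mP l 1 1 + 1 = mP l 1 0 * mP l 0 1) ∧
    (Even l.length → mP l 1 0 * mP l 0 1 + 1 = mP l 0 0 * mP l 1 1) := by
  intro l
  induction l with
  | nil =>
      constructor
      · intro h; simp at h
      · intro _; simp [mP_nil]
  | cons a l ih =>
      obtain ⟨ihodd, iheven⟩ := ih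
      obtain ⟨e00, e10, e01, e11⟩ := mf_entries a (mP l)
      rw [mP_cons]
      constructor
      · intro h
        have he : Even l.length := by
          rcases Nat.even_or_odd l.length with h' | h'
          · exact h'
          · exfalso; rw [List.length_cons] at h
            rcases h' with ⟨k, hk⟩; rcases h with ⟨m, hm⟩; omega
        have := iheven he
        rw [e00, e10, e01, e11]
        nlinarith
      · intro h
        have ho : Odd l.length := by
          rcases Nat.even_or_odd l.length with h' | h'
          · exfalso; rw [List.length_cons] at h
            rcases h' with ⟨k, hk⟩; rcases h with ⟨m, hm⟩; omega
          · exact h'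
        have := ihodd ho
        rw [e00, e10, e01, e11]
        nlinarith

/-- `S` equals the sum of the list of partial quotients. -/
lemma S_eq_sum : ∀ q p : ℕ, S p q = (cfL p q).sum := by
  intro q
  induction q using Nat.strong_induction_on with
  | _ q ih =>
      intro p
      by_cases h : q = 0
      · subst h; rw [S, cfL]; simp
      · rw [S, cfL, dif_neg h, dif_neg h, List.sum_cons,
          ih (p % q) (Nat.mod_lt _ (Nat.pos_of_ne_zero h)) q]

/-- All partial quotients are positive when `q ≤ p`. -/
lemma cfL_pos : ∀ q p : ℕ, q ≤ p → ∀ a ∈ cfL p q, 1 ≤ a := by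
  intro q
  induction q using Nat.strong_induction_on with
  | _ q ih =>
      intro p hqp a ha
      by_cases h : q = 0
      · subst h; rw [cfL] at ha; simp at ha
      · rw [cfL, dif_neg h] at ha
        rcases List.mem_cons.mp ha with h1 | h2
        · subst h1
          exact Nat.one_le_div_iff (Nat.pos_of_ne_zero h) |>.mpr hqp
        · exact ih (p % q) (Nat.mod_lt _ (Nat.pos_of_ne_zero h)) q
            (le_of_lt (Nat.mod_lt _ (Nat.pos_of_ne_zero h))) a h2

lemma coprime_mod (p q : ℕ) (h : Nat.Coprime p q) : Nat.Coprime q (p % q) := by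
  have hg : Nat.gcd q (p % q) = Nat.gcd p q := by
    rw [Nat.gcd_comm q (p % q), ← Nat.gcd_rec, Nat.gcd_comm]
  simpa [Nat.Coprime, hg] using h

/-- Column-0 recovery: the continuant matrix of `cfL p q` has first column `(p, q)`. -/
lemma cfL_col : ∀ q p : ℕ, 1 ≤ q → Nat.Coprime p q →
    mP (cfL p q) 0 0 = p ∧ mP (cfL p q) 1 0 = q := by
  intro q
  induction q using Nat.strong_induction_on with
  | _ q ih =>
      intro p hq hcop
      have hq0 : q ≠ 0 := by omega
      by_cases hr : p % q = 0
      · have hq1 : q = 1 :=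
          Nat.Coprime.eq_one_of_dvd hcop.symm (Nat.dvd_of_mod_eq_zero hr)
        subst hq1
        have hcf : cfL p 1 = [p] := by
          rw [cfL, dif_neg one_ne_zero, Nat.mod_one, cfL, dif_pos rfl, Nat.div_one]
        rw [hcf]
        constructor <;> simp [mP_cons, mP_nil, mf]
      · have hcop' := coprime_mod p q hcop
        obtain ⟨h00, h10⟩ := ih (p % q) (Nat.mod_lt _ (by omega)) q
          (Nat.one_le_iff_ne_zero.mpr hr) hcop'
        rw [cfL, dif_neg hq0, mP_cons]
        obtain ⟨e00, e10, -, -⟩ := mf_entries (p / q) (mP (cfL q (p % q)))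
        exact ⟨by rw [e00, h00, h10]; exact Nat.div_add_mod' p q, by rw [e10, h00]⟩

/-- The last partial quotient is at least 2 when `2 ≤ q < p`, `p` coprime to `q`. -/
lemma cfL_last : ∀ q p : ℕ, 2 ≤ q → Nat.Coprime p q →
    ∃ l' a, cfL p q = l' ++ [a] ∧ 2 ≤ a := by
  intro q
  induction q using Nat.strong_induction_on with
  | _ q ih =>
      intro p hq hcop
      have hq0 : q ≠ 0 := by omega
      have hr : p % q ≠ 0 := by
        intro h
        have hdvd : q ∣ p := Nat.dvd_of_mod_eq_zero h
        have := Nat.Coprime.eq_one_of_dvd hcop.symm hdvd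
        omega
      have hcop' : Nat.Coprime q (p % q) := coprime_mod p q hcop
      by_cases hr1 : p % q = 1
      · refine ⟨[p / q], q, ?_, hq⟩
        have h1 : cfL q 1 = [q] := by
          rw [cfL, dif_neg one_ne_zero, Nat.mod_one, Nat.div_one, cfL, dif_pos rfl]
        rw [cfL, dif_neg hq0, hr1, h1]
        rfl
      · obtain ⟨l', a, hl, ha⟩ := ih (p % q) (Nat.mod_lt _ (by omega)) q
          (by omega) hcop'
        refine ⟨p / q :: l', a, ?_, ha⟩
        rw [cfL, dif_neg hq0, hl]
        rfl

/-- Core theorem: for `0 < r < β` coprime, `r * r' ≡ 1 [MOD β]`, `0 < r' < β`,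
the sums of partial quotients of `β/r` and `β/r'` agree. -/
lemma core (β r r' : ℕ) (hβ : 2 ≤ β) (hr0 : 0 < r) (hrβ : r < β)
    (hcop : Nat.Coprime β r) (hr'0 : 0 < r') (hr'β : r' < β)
    (hmod : r * r' ≡ 1 [MOD β]) : S β r' = S β r := by
  by_cases hr1 : r = 1
  · -- then r' = 1
    subst hr1
    have : r' % β = 1 % β := by rw [one_mul] at hmod; exact hmod
    rw [Nat.mod_eq_of_lt hr'β, Nat.mod_eq_of_lt (by omega)] at this
    rw [this]
  · -- r ≥ 2
    have hr2 : 2 ≤ r := by omega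
    obtain ⟨l', a, hl, ha⟩ := cfL_last r β hr2 hcop
    -- choose an odd-length list l₁ with the right properties
    have hpos : ∀ x ∈ cfL β r, 1 ≤ x := cfL_pos r β (le_of_lt hrβ)
    obtain ⟨hc00, hc10⟩ := cfL_col r β (by omega) hcop
    obtain ⟨l₁, hne, hodd, hsum, h00, h10, hpos1⟩ :
        ∃ l₁ : List ℕ, l₁ ≠ [] ∧ Odd l₁.length ∧ l₁.sum = (cfL β r).sum ∧
          mP l₁ 0 0 = β ∧ mP l₁ 1 0 = r ∧ ∀ x ∈ l₁, 1 ≤ x := by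
      rcases Nat.even_or_odd (cfL β r).length with he | ho
      · -- modify: l' ++ [a] ↦ l' ++ [a-1, 1]
        refine ⟨l' ++ [a - 1, 1], by simp, ?_, ?_, ?_, ?_, ?_⟩
        · rw [hl] at he
          rcases he with ⟨k, hk⟩
          refine ⟨k, ?_⟩
          simp only [List.length_append, List.length_cons, List.length_nil] at hk ⊢
          omega
        · rw [hl, List.sum_append, List.sum_append, List.sum_cons, List.sum_cons,
            List.sum_cons, List.sum_nil]
          omega
        · have : mP (l' ++ [a - 1, 1]) = mP l' * (mf (a - 1) * mf 1) := by
            rw [mP_append, mP_cons, mP_cons, mP_nil, mul_one]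
          rw [this]
          have h2 : mP (cfL β r) = mP l' * mf a := by
            rw [hl, mP_append, mP_cons, mP_nil, mul_one]
          have hcol : ∀ i, (mf (a - 1) * mf 1) i 0 = mf a i 0 := by
            intro i
            fin_cases i <;>
              simp [mf, Matrix.mul_apply, Fin.sum_univ_two] <;> omega
          rw [← hc00, h2, Matrix.mul_apply, Matrix.mul_apply]
          exact Finset.sum_congr rfl fun j _ => by rw [hcol j]
        · have : mP (l' ++ [a - 1, 1]) = mP l' * (mf (a - 1) * mf 1) := by
            rw [mP_append, mP_cons, mP_cons, mP_nil, mul_one]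
          rw [this]
          have h2 : mP (cfL β r) = mP l' * mf a := by
            rw [hl, mP_append, mP_cons, mP_nil, mul_one]
          have hcol : ∀ i, (mf (a - 1) * mf 1) i 0 = mf a i 0 := by
            intro i
            fin_cases i <;>
              simp [mf, Matrix.mul_apply, Fin.sum_univ_two] <;> omega
          rw [← hc10, h2, Matrix.mul_apply, Matrix.mul_apply]
          exact Finset.sum_congr rfl fun j _ => by rw [hcol j]
        · intro x hx
          rcases List.mem_append.mp hx with h1 | h2
          · exact hpos x (by rw [hl]; exact List.mem_append.mpr (Or.inl h1))
          · simp at h2; rcases h2 with h2 | h2 <;> omega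
      · refine ⟨cfL β r, ?_, ho, rfl, hc00, hc10, hpos⟩
        rw [hl]; simp
    -- determinant identity: β * d + 1 = r * b
    set b := mP l₁ 0 1 with hb
    set d := mP l₁ 1 1 with hd
    have hdet : β * d + 1 = r * b := by
      have := (keyD l₁).1 hodd
      rw [h00, h10] at this
      exact this
    -- reversal
    have hrev := mP_reverse l₁
    have hrne : l₁.reverse ≠ [] := by
      intro h; apply hne; simpa using congrArg List.reverse h
    have hrpos : ∀ x ∈ l₁.reverse, 1 ≤ x := fun x hx =>
      hpos1 x (List.mem_reverse.mp hx)
    have hr00 : mP l₁.reverse 0 0 = β := by rw [hrev, Matrix.transpose_apply, h00]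
    have hr10 : mP l₁.reverse 1 0 = b := by rw [hrev]; rfl
    obtain ⟨hSrev, hb1, hbβ, hbeq⟩ := keyA l₁.reverse hrne hrpos
    simp only [hr00, hr10] at hSrev hb1 hbβ hbeq
    have hbltβ : b < β := by
      rcases lt_or_eq_of_le hbβ with h | h
      · exact h
      · exfalso
        have hl1 : l₁.reverse = [1] := hbeq h
        have : l₁ = [1] := by
          have := congrArg List.reverse hl1
          simpa using this
        rw [this] at h10
        have : mP [1] 1 0 = 1 := by simp [mP_cons, mP_nil, mf]
        omega
    -- b ≡ r' mod β hence b = r'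
    have hmodb : r * b ≡ 1 [MOD β] := by
      show (r * b) % β = 1 % β
      rw [← hdet, Nat.mul_add_mod]
    have hcop2 : Nat.Coprime r β := by rwa [Nat.coprime_comm] at hcop
    have : r * b ≡ r * r' [MOD β] := hmodb.trans hmod.symm
    have hbr' : b ≡ r' [MOD β] := Nat.ModEq.cancel_left_of_coprime
      (by rwa [Nat.Coprime] at hcop2) this
    have hbeqr' : b = r' := by
      have h1 : b % β = r' % β := hbr'
      rwa [Nat.mod_eq_of_lt hbltβ, Nat.mod_eq_of_lt hr'β] at h1
    rw [← hbeqr']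
    rw [hSrev, List.sum_reverse, hsum, ← S_eq_sum]

theorem stmt_3 (α β α' : ℕ) (hβ : 2 ≤ β) (hβα : β < α) (hcop : Nat.Coprime α β)
    (hα'0 : 0 < α') (hα'β : α' < β) (hmod : α * α' ≡ 1 [MOD β]) :
    S β α' = S α β - α / β := by
  have hβ0 : β ≠ 0 := by omega
  have hSα : S α β = α / β + S β (α % β) := by rw [S, dif_neg hβ0]
  set r := α % β with hr
  have hr0 : 0 < r := by
    rcases Nat.eq_zero_or_pos r with h | h
    · exfalso
      have hdvd : β ∣ α := Nat.dvd_of_mod_eq_zero h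
      have := Nat.Coprime.eq_one_of_dvd hcop.symm hdvd
      omega
    · exact h
  have hrβ : r < β := Nat.mod_lt _ (by omega)
  have hcop' : Nat.Coprime β r := coprime_mod α β hcop
  have hmod' : r * α' ≡ 1 [MOD β] := by
    have hαr : α ≡ r [MOD β] := (Nat.mod_modEq α β).symm
    exact ((hαr.mul_right α').symm.trans hmod)
  have := core β r α' hβ hr0 hrβ hcop' hα'0 hα'β hmod'
  omega
end

section
/- For coprime integers α, β with 2 ≤ β ≤ α/2 (so in particular β < α), we have S(α, β) ≤ β + ⌊α/β⌋. -/
lemma S_aux : ∀ r q : ℕ, r < q → S q r ≤ q := by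
  intro r
  induction r using Nat.strong_induction_on with
  | _ r ih =>
    intro q hrq
    match r with
    | 0 => rw [S]; simp
    | 1 =>
      rw [S, dif_neg one_ne_zero]
      simp [Nat.mod_one, S]
    | (n+2) =>
      set r := n + 2 with hr
      have hrpos : 0 < r := by omega
      rw [S, dif_neg (by omega : r ≠ 0)]
      have hmod : q % r < r := Nat.mod_lt _ hrpos
      have h1 : S r (q % r) ≤ r := ih (q % r) (by omega) r hmod
      have h2 : q / r + r ≤ q := by
        have hk : q / r * r ≤ q := Nat.div_mul_le_self q r
        have hk1 : 1 ≤ q / r := Nat.one_le_div_iff hrpos |>.mpr (le_of_lt hrq)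
        rcases Nat.lt_or_ge (q / r) 2 with h | h
        · omega
        · nlinarith
      omega

theorem stmt_4 (α β : ℕ) (hβ : 2 ≤ β) (hβα : 2 * β ≤ α) (hcop : Nat.Coprime α β) :
    S α β ≤ β + α / β := by
  rw [S, dif_neg (by omega : β ≠ 0)]
  have := S_aux (α % β) β (Nat.mod_lt _ (by omega))
  omega
end

section
/- Let α be an even integer with α ≥ 4, and let β be coprime to α with 2 ≤ β ≤ α - 2. Then S(α, β) ≤ α/2 + 1. -/
theorem lemA : ∀ q r : ℕ, 0 < r → r < q → Nat.Coprime q r → S q r ≤ q := by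
  intro q
  induction q using Nat.strong_induction_on with
  | _ q ih =>
    intro r hr hrq hcop
    rw [S, dif_neg (by omega)]
    rcases eq_or_lt_of_le (show 1 ≤ r from hr) with h1 | h2
    · -- r = 1
      have : r = 1 := h1.symm
      subst this
      rw [show q % 1 = 0 from Nat.mod_one q, S, dif_pos rfl]
      simp
    · -- r ≥ 2
      have hmod : q % r ≠ 0 := by
        intro h
        have hdvd : r ∣ q := Nat.dvd_of_mod_eq_zero h
        have hg : Nat.gcd r q = r := Nat.gcd_eq_left hdvd
        rw [Nat.gcd_comm] at hg
        unfold Nat.Coprime at hcop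
        omega
      have hmodlt : q % r < r := Nat.mod_lt _ (by omega)
      have hcop' : Nat.Coprime r (q % r) := by
        unfold Nat.Coprime at *
        rw [Nat.gcd_comm, ← Nat.gcd_rec, Nat.gcd_comm]
        exact hcop
      have hrec := ih r hrq (q % r) (by omega) hmodlt hcop'
      have hdiv : q / r + r ≤ q := by
        rcases le_or_gt (2 * r) q with hc | hc
        · have h1 : q / r ≤ q / 2 := by
            apply Nat.div_le_div_left (by omega) (by omega)
          omega
        · have h1 : q / r = 1 := Nat.div_eq_of_lt_le (by omega) (by omega)
          omega
      omega

theorem cop_mod (a b : ℕ) (hb : 2 ≤ b) (h : Nat.Coprime a b) :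
    0 < a % b ∧ Nat.Coprime b (a % b) := by
  constructor
  · rcases Nat.eq_zero_or_pos (a % b) with h0 | h0
    · exfalso
      have hdvd : b ∣ a := Nat.dvd_of_mod_eq_zero h0
      have hg : Nat.gcd b a = b := Nat.gcd_eq_left hdvd
      rw [Nat.gcd_comm] at hg
      unfold Nat.Coprime at h
      omega
    · exact h0
  · unfold Nat.Coprime at *
    rw [Nat.gcd_comm, ← Nat.gcd_rec, Nat.gcd_comm]
    exact h

theorem stmt_5 (α β : ℕ) (heven : Even α) (hα : 4 ≤ α) (hcop : Nat.Coprime α β)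
    (hβ : 2 ≤ β) (hβα : β ≤ α - 2) :
    S α β ≤ α / 2 + 1 := by
  have hαe : α % 2 = 0 := Nat.even_iff.mp heven
  have hβodd : β % 2 = 1 := by
    rcases Nat.even_or_odd β with h | h
    · exfalso
      have h2 : (2:ℕ) ∣ Nat.gcd α β :=
        Nat.dvd_gcd (even_iff_two_dvd.mp heven) (even_iff_two_dvd.mp h)
      rw [hcop] at h2
      omega
    · exact Nat.odd_iff.mp h
  have hβ3 : 3 ≤ β := by omega
  have hβltα : β < α := by omega
  obtain ⟨hrpos, hcopβr⟩ := cop_mod α β (by omega) hcop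
  have hrlt : α % β < β := Nat.mod_lt _ (by omega)
  rw [S, dif_neg (by omega)]
  rcases le_or_gt (2 * β) α with hc | hc
  · -- Case 1 : first quotient q ≥ 2
    have hSr : S β (α % β) ≤ β := lemA β (α % β) hrpos hrlt hcopβr
    have hq2 : 2 ≤ α / β := by
      rw [Nat.le_div_iff_mul_le (by omega)]
      omega
    have heq : α / β * β + α % β = α := by rw [Nat.mul_comm]; exact Nat.div_add_mod α β
    rcases eq_or_lt_of_le hq2 with h2 | h3
    · -- q = 2
      rw [← h2] at heq
      omega
    · -- q ≥ 3
      have ht : 3 * (β - 2) ≤ (α / β) * (β - 2) := Nat.mul_le_mul_right _ (by omega)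
      have heq' : (α / β) * (β - 2) + 2 * (α / β) + α % β = α := by
        have hb : β - 2 + 2 = β := by omega
        calc (α / β) * (β - 2) + 2 * (α / β) + α % β
            = (α / β) * ((β - 2) + 2) + α % β := by ring
          _ = α := by rw [hb]; exact heq
      generalize hgen : (α / β) * (β - 2) = t at ht heq'
      omega
  · -- Case 2 : first quotient q = 1
    have hq1 : α / β = 1 := Nat.div_eq_of_lt_le (by omega) (by omega)
    have hrval : α % β = α - β := by
      rw [Nat.mod_eq_sub_mod (by omega), Nat.mod_eq_of_lt (by omega)]
    set r := α % β with hrdef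
    have hr3 : 3 ≤ r := by omega
    rw [S, dif_neg (by omega)]
    obtain ⟨hr2pos, hcoprr2⟩ := cop_mod β r (by omega) hcopβr
    have hr2lt : β % r < r := Nat.mod_lt _ (by omega)
    have hSr2 : S r (β % r) ≤ r := lemA r (β % r) hr2pos hr2lt hcoprr2
    have hq2pos : 1 ≤ β / r := by
      rw [Nat.le_div_iff_mul_le (by omega)]
      omega
    have heq : β / r * r + β % r = β := by rw [Nat.mul_comm]; exact Nat.div_add_mod β r
    rcases eq_or_lt_of_le hq2pos with h1 | h2
    · -- q2 = 1
      rw [← h1] at heq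
      omega
    · -- q2 ≥ 2
      have ht : 2 * (r - 2) ≤ (β / r) * (r - 2) := Nat.mul_le_mul_right _ (by omega)
      have heq' : (β / r) * (r - 2) + 2 * (β / r) + β % r = β := by
        have hb : r - 2 + 2 = r := by omega
        calc (β / r) * (r - 2) + 2 * (β / r) + β % r
            = (β / r) * ((r - 2) + 2) + β % r := by ring
          _ = β := by rw [hb]; exact heq
      generalize hgen : (β / r) * (r - 2) = t at ht heq'
      omega
end
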